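/- Let F_X = {X ⪰ 0 : A(X) = b} be invariant under a group G of permutation matrices, and let r = max{rank(X) : X ∈ F_X}. Then r = max{rank(R_G(X)) : X ∈ F_X} = max{rank(X) : X ∈ F_X ∩ A_G}, where R_G is the Reynolds operator and A_G the commutant. -/

import Mathlib

/-!
Averaging `X ∈ F` over its conjugates `Pᵀ X P` gives `R_G(X)`, a convex combination of points of
the convex set `F`, hence again in `F`; conjugating by `Q ∈ G` only permutes the terms, so `R_G(X)`
lies in the commutant. The terms are positive semidefinite and one of them is `X` itself, so
`ker R_G(X) ⊆ ker X` and averaging cannot lower the rank: `R_G` maps a point of maximal rank in `F`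
to a point of maximal rank in `F ∩ A_G`.
-/

open Matrix

/-- `P` is a permutation matrix. -/
def IsPermMatrix {n : ℕ} (P : Matrix (Fin n) (Fin n) ℝ) : Prop :=
  ∃ σ : Equiv.Perm (Fin n), ∀ i j, P i j = if i = σ j then 1 else 0

theorem IsPermMatrix.exists_eq_permMatrix {n : ℕ} {P : Matrix (Fin n) (Fin n) ℝ}
    (h : IsPermMatrix P) : ∃ σ : Equiv.Perm (Fin n), P = σ.permMatrix ℝ := by
  obtain ⟨σ, hσ⟩ := h
  refine ⟨σ⁻¹, ext fun i j => ?_⟩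
  simp only [hσ, Equiv.Perm.permMatrix, PEquiv.toMatrix_apply, Equiv.toPEquiv_apply,
    Equiv.Perm.inv_def, Option.mem_def, Option.some_inj, Equiv.eq_symm_apply, eq_comm]

theorem IsPermMatrix.transpose_mul_self {n : ℕ} {P : Matrix (Fin n) (Fin n) ℝ}
    (h : IsPermMatrix P) : Pᵀ * P = 1 := by
  obtain ⟨σ, rfl⟩ := h.exists_eq_permMatrix
  rw [transpose_permMatrix, ← permMatrix_mul, mul_inv_cancel, permMatrix_one]

namespace Matrix

variable {m n 𝕜 K : Type*}

open scoped ComplexOrder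

theorem convex_setOf_posSemidef [RCLike 𝕜] : Convex ℝ {A : Matrix n n 𝕜 | A.PosSemidef} :=
  fun _ hA _ hB _ _ ha hb _ => (hA.smul ha).add (hB.smul hb)

theorem convex_setOf_posSemidef_and_eq {E : Type*} [AddCommGroup E] [Module ℝ E]
    (𝒜 : Matrix n n ℝ →ₗ[ℝ] E) (b : E) :
    Convex ℝ {X : Matrix n n ℝ | X.PosSemidef ∧ 𝒜 X = b} :=
  convex_setOf_posSemidef.inter ((convex_singleton b).linear_preimage 𝒜)

variable [Fintype n]

theorem rank_le_rank_of_ker_le [Field K] {A B : Matrix m n K}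
    (h : LinearMap.ker B.mulVecLin ≤ LinearMap.ker A.mulVecLin) : A.rank ≤ B.rank := by
  have hA := LinearMap.finrank_range_add_finrank_ker A.mulVecLin
  have hB := LinearMap.finrank_range_add_finrank_ker B.mulVecLin
  have hker := Submodule.finrank_mono h
  rw [rank, rank]
  omega

section PosSemidef

variable [RCLike 𝕜]

theorem PosSemidef.rank_le_rank_add {A B : Matrix n n 𝕜} (hA : A.PosSemidef)
    (hB : B.PosSemidef) : A.rank ≤ (A + B).rank := by
  refine rank_le_rank_of_ker_le fun v hv => ?_
  simp only [LinearMap.mem_ker, mulVecLin_apply] at hv ⊢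
  have hsum : star v ⬝ᵥ A *ᵥ v + star v ⬝ᵥ B *ᵥ v = 0 := by
    rw [← dotProduct_add, ← add_mulVec, hv, dotProduct_zero]
  have hzero := (add_eq_zero_iff_of_nonneg (hA.dotProduct_mulVec_nonneg v)
    (hB.dotProduct_mulVec_nonneg v)).1 hsum
  exact (hA.dotProduct_mulVec_zero_iff v).1 hzero.1

theorem PosSemidef.rank_le_rank_sum {ι : Type*} {s : Finset ι} {A : ι → Matrix n n 𝕜}
    (h : ∀ i ∈ s, (A i).PosSemidef) {j : ι} (hj : j ∈ s) :
    (A j).rank ≤ (∑ i ∈ s, A i).rank := by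
  classical
  rw [← Finset.add_sum_erase s A hj]
  exact (h j hj).rank_le_rank_add (posSemidef_sum _ fun i hi => h i (Finset.mem_of_mem_erase hi))

end PosSemidef

section Reynolds

variable [Field K]

def reynolds (G : Finset (Matrix n n K)) (X : Matrix n n K) : Matrix n n K :=
  (G.card : K)⁻¹ • ∑ P ∈ G, Pᵀ * X * P

theorem reynolds_mem_of_convex [LinearOrder K] [IsStrictOrderedRing K] {G : Finset (Matrix n n K)}
    {F : Set (Matrix n n K)} (hF : Convex K F) (hG : G.Nonempty) {X : Matrix n n K}
    (hX : ∀ P ∈ G, Pᵀ * X * P ∈ F) : reynolds G X ∈ F := by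
  rw [reynolds, Finset.smul_sum]
  exact hF.sum_mem (fun _ _ => by positivity) (by simp [Finset.card_ne_zero.2 hG]) hX

theorem commute_reynolds [DecidableEq n] {G : Finset (Matrix n n K)}
    (hmul : ∀ P ∈ G, ∀ Q ∈ G, P * Q ∈ G) (hinv : ∀ P ∈ G, Pᵀ ∈ G)
    (horth : ∀ P ∈ G, Pᵀ * P = 1) {Q : Matrix n n K} (hQ : Q ∈ G) (X : Matrix n n K) :
    Commute Q (reynolds G X) := by
  refine Commute.smul_right ?_ _
  have hQQt : Q * Qᵀ = 1 := mul_eq_one_comm.1 (horth Q hQ)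
  have reindex : ∑ P ∈ G, Q * ((P * Q)ᵀ * X * (P * Q)) = ∑ P ∈ G, Q * (Pᵀ * X * P) :=
    Finset.sum_nbij' (· * Q) (· * Qᵀ) (fun P hP => hmul P hP Q hQ)
      (fun P hP => hmul P hP _ (hinv Q hQ)) (fun P _ => by simp [mul_assoc, hQQt])
      (fun P _ => by simp [mul_assoc, horth Q hQ]) fun _ _ => rfl
  calc Q * ∑ P ∈ G, Pᵀ * X * P
      = ∑ P ∈ G, Q * ((P * Q)ᵀ * X * (P * Q)) := by rw [reindex, Finset.mul_sum]
    _ = ∑ P ∈ G, Pᵀ * X * P * Q := by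
        refine Finset.sum_congr rfl fun P _ => ?_
        simp only [transpose_mul, ← mul_assoc, hQQt, one_mul]
    _ = (∑ P ∈ G, Pᵀ * X * P) * Q := (Finset.sum_mul _ _ _).symm

theorem rank_le_rank_reynolds [DecidableEq n] {G : Finset (Matrix n n ℝ)} (hG : 1 ∈ G)
    {X : Matrix n n ℝ} (hX : X.PosSemidef) : X.rank ≤ (reynolds G X).rank := by
  have hcard : (G.card : ℝ)⁻¹ ≠ 0 :=
    inv_ne_zero (Nat.cast_ne_zero.2 (Finset.card_ne_zero_of_mem hG))
  rw [reynolds, rank_smul_of_mem_nonZeroDivisors _ (mem_nonZeroDivisors_of_ne_zero hcard)]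
  have hconj : ∀ P ∈ G, (Pᵀ * X * P).PosSemidef := fun P _ => by
    simpa [conjTranspose_eq_transpose_of_trivial] using hX.conjTranspose_mul_mul_same P
  simpa only [transpose_one, one_mul, mul_one] using
    PosSemidef.rank_le_rank_sum (A := fun P => Pᵀ * X * P) hconj hG

end Reynolds

end Matrix

/-- Let `F = {X ⪰ 0 : 𝒜(X) = b}` be invariant under a group `G` of permutation matrices,
and let `r = max{rank X : X ∈ F}`. Then `r = max{rank (R_G X) : X ∈ F}`
`= max{rank X : X ∈ F ∩ A_G}`, where `R_G` is the Reynolds operator and `A_G` the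
commutant. -/
theorem rank_max_reynolds_commutant {n m : ℕ}
    (𝒜 : Matrix (Fin n) (Fin n) ℝ →ₗ[ℝ] (Fin m → ℝ)) (b : Fin m → ℝ)
    (G : Finset (Matrix (Fin n) (Fin n) ℝ))
    (hone : (1 : Matrix (Fin n) (Fin n) ℝ) ∈ G)
    (hperm : ∀ P ∈ G, IsPermMatrix P)
    (hmul : ∀ P ∈ G, ∀ Q ∈ G, P * Q ∈ G)
    (hinv : ∀ P ∈ G, Pᵀ ∈ G)
    (F : Set (Matrix (Fin n) (Fin n) ℝ))
    (hF : F = {X | X.PosSemidef ∧ 𝒜 X = b})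
    (hinvar : ∀ X ∈ F, ∀ P ∈ G, P * X * Pᵀ ∈ F)
    (r : ℕ) (hub : ∀ X ∈ F, X.rank ≤ r) (hach : ∃ X ∈ F, X.rank = r) :
    let RG : Matrix (Fin n) (Fin n) ℝ → Matrix (Fin n) (Fin n) ℝ :=
      fun X => (G.card : ℝ)⁻¹ • ∑ P ∈ G, Pᵀ * X * P
    let AG : Set (Matrix (Fin n) (Fin n) ℝ) := {M | ∀ P ∈ G, P * M = M * P}
    (∀ X ∈ F, (RG X).rank ≤ r) ∧ (∃ X ∈ F, (RG X).rank = r) ∧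
      (∀ X ∈ F ∩ AG, X.rank ≤ r) ∧ (∃ X ∈ F ∩ AG, X.rank = r) := by
  intro RG AG
  have hRG_mem : ∀ X ∈ F, RG X ∈ F := fun X hX =>
    reynolds_mem_of_convex (hF ▸ convex_setOf_posSemidef_and_eq 𝒜 b) ⟨1, hone⟩
      fun P hP => by simpa using hinvar X hX Pᵀ (hinv P hP)
  have hRG_comm : ∀ X, RG X ∈ AG := fun X _ hP =>
    commute_reynolds hmul hinv (fun P hP => (hperm P hP).transpose_mul_self) hP X
  obtain ⟨X₀, hX₀, rfl⟩ := hach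
  have hrank : (RG X₀).rank = X₀.rank :=
    le_antisymm (hub _ (hRG_mem X₀ hX₀)) (rank_le_rank_reynolds hone (hF ▸ hX₀).1)
  exact ⟨fun X hX => hub _ (hRG_mem X hX), ⟨X₀, hX₀, hrank⟩, fun X hX => hub X hX.1,
    ⟨RG X₀, ⟨hRG_mem X₀ hX₀, hRG_comm X₀⟩, hrank⟩⟩
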